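/- arXiv:1203.2979 — 2 statements merged into one kernel-verified Lean document; each statement's English description precedes it below -/
import Mathlib

section
/- Let R(k,k') = 16 sin²(πk) sin²(πk')(sin²(π(k+k')) + sin²(π(k-k'))) and suppose f ∈ L²(T) satisfies ∫_T R(k,k')(f(k') - f(k)) dk' = 0 for a.e. k. Then f is constant almost everywhere on T. -/
/-!
Writing `s = sin² (π ·)` and `c = cos (2π ·)`, the kernel is of rank two:
`R k k' = 16 s(k) s(k') (1 - c(k) c(k'))`. Since `∫ s = 1/2` and `∫ s c = -1/4` over `𝕋`, the
equation reads `4 s(k) (4A - 4B c(k) - (2 + c(k)) f(k)) = 0` with `A = ∫ s f`, `B = ∫ s c f`,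
and `s(k) ≠ 0` a.e., so `f = -4B + γ / (2 + c)` a.e. for a constant `γ`. Feeding this back into
the definition of `B` gives `γ ∫ s c / (2 + c) = 0`, and `∫ s c / (2 + c) ≤ ∫ s c / 2 = -1/8`,
so `γ = 0`.
-/

open MeasureTheory Set Real

local notation "𝕋" => Ioc (-(1:ℝ)/2) (1/2)

lemma integral_cos_two_pi_int_mul {n : ℤ} (hn : n ≠ 0) :
    ∫ x in (-(1:ℝ)/2)..(1/2), cos (2 * π * n * x) = 0 := by
  have hc : 2 * π * n ≠ 0 := by positivity
  rw [intervalIntegral.integral_comp_mul_left (fun x => cos x) hc, integral_cos,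
    show 2 * π * n * (1 / 2) = n * π by ring, show 2 * π * n * (-1 / 2) = -(n * π) by ring,
    sin_neg, sin_int_mul_pi]
  simp

lemma sin_sq_pi_mul (x : ℝ) : sin (π * x) ^ 2 = (1 - cos (2 * π * x)) / 2 := by
  rw [sin_sq_eq_half_sub, ← mul_assoc]; ring

lemma sin_sq_add_sin_sq_pi_mul (k k' : ℝ) :
    sin (π * (k + k')) ^ 2 + sin (π * (k - k')) ^ 2 = 1 - cos (2 * π * k) * cos (2 * π * k') := by
  rw [sin_sq_pi_mul, sin_sq_pi_mul, mul_add, mul_sub, cos_add, cos_sub]; ring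

lemma setIntegral_sin_sq_pi_mul : ∫ x in 𝕋, sin (π * x) ^ 2 = 1 / 2 := by
  have h := integral_cos_two_pi_int_mul (n := 1) one_ne_zero
  simp only [Int.cast_one, mul_one] at h
  rw [← intervalIntegral.integral_of_le (by norm_num)]
  simp_rw [sin_sq_pi_mul]
  rw [intervalIntegral.integral_div, intervalIntegral.integral_sub (by simp)
    (Continuous.intervalIntegrable (by fun_prop) _ _), h]
  norm_num

lemma setIntegral_sin_sq_pi_mul_mul_cos :
    ∫ x in 𝕋, sin (π * x) ^ 2 * cos (2 * π * x) = -1 / 4 := by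
  have h₁ := integral_cos_two_pi_int_mul (n := 1) one_ne_zero
  have h₂ := integral_cos_two_pi_int_mul (n := 2) two_ne_zero
  push_cast at h₁ h₂
  have hpt (x : ℝ) : sin (π * x) ^ 2 * cos (2 * π * x)
      = (2 * cos (2 * π * 1 * x) - cos (2 * π * 2 * x) - 1) / 4 := by
    rw [sin_sq_pi_mul, show 2 * π * 2 * x = 2 * (2 * π * x) by ring, cos_two_mul]; ring_nf
  have hint (n : ℝ) : IntervalIntegrable (fun x => cos (2 * π * n * x)) volume (-1 / 2) (1 / 2) :=
    Continuous.intervalIntegrable (by fun_prop) _ _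
  rw [← intervalIntegral.integral_of_le (by norm_num)]
  simp_rw [hpt]
  rw [intervalIntegral.integral_div,
    intervalIntegral.integral_sub ((hint 1).const_mul 2 |>.sub (hint 2)) (by simp),
    intervalIntegral.integral_sub ((hint 1).const_mul 2) (hint 2),
    intervalIntegral.integral_const_mul, h₁, h₂]
  norm_num

lemma ae_sin_pi_mul_ne_zero : ∀ᵐ x : ℝ, sin (π * x) ≠ 0 := by
  refine measure_mono_null (fun x (hx : ¬ sin (π * x) ≠ 0) => ?_)
    ((countable_range ((↑) : ℤ → ℝ)).measure_zero _)
  obtain ⟨n, hn⟩ := sin_eq_zero_iff.mp (not_not.mp hx)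
  exact ⟨n, mul_left_cancel₀ pi_ne_zero (by linarith)⟩

lemma IntegrableOn.continuous_mul_Ioc {f g : ℝ → ℝ} {a b : ℝ} (hf : IntegrableOn f (Ioc a b))
    (hg : Continuous g) : IntegrableOn (fun x => g x * f x) (Ioc a b) :=
  hf.continuousOn_mul_of_subset hg.continuousOn isCompact_Icc measurableSet_Ioc
    Ioc_subset_Icc_self

lemma setIntegral_kernel_mul_sub {f : ℝ → ℝ} (hf : IntegrableOn f 𝕋) (k : ℝ) :
    ∫ k' in 𝕋, 16 * sin (π * k) ^ 2 * sin (π * k') ^ 2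
        * (sin (π * (k + k')) ^ 2 + sin (π * (k - k')) ^ 2) * (f k' - f k)
      = 4 * sin (π * k) ^ 2 * (4 * (∫ k' in 𝕋, sin (π * k') ^ 2 * f k')
          - 4 * cos (2 * π * k) * (∫ k' in 𝕋, sin (π * k') ^ 2 * cos (2 * π * k') * f k')
          - (2 + cos (2 * π * k)) * f k) := by
  have hpt (k' : ℝ) : 16 * sin (π * k) ^ 2 * sin (π * k') ^ 2
        * (sin (π * (k + k')) ^ 2 + sin (π * (k - k')) ^ 2) * (f k' - f k)
      = 16 * sin (π * k) ^ 2 * ((sin (π * k') ^ 2 * f k'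
          - cos (2 * π * k) * (sin (π * k') ^ 2 * cos (2 * π * k') * f k'))
          - f k * (sin (π * k') ^ 2
            - cos (2 * π * k) * (sin (π * k') ^ 2 * cos (2 * π * k')))) := by
    rw [sin_sq_add_sin_sq_pi_mul]; ring
  have hs : IntegrableOn (fun x => sin (π * x) ^ 2 * f x) 𝕋 :=
    IntegrableOn.continuous_mul_Ioc hf (by fun_prop)
  have hsc : IntegrableOn (fun x => sin (π * x) ^ 2 * cos (2 * π * x) * f x) 𝕋 :=
    IntegrableOn.continuous_mul_Ioc hf (by fun_prop)
  have hs₀ : IntegrableOn (fun x => sin (π * x) ^ 2) 𝕋 :=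
    Continuous.integrableOn_Ioc (by fun_prop)
  have hsc₀ : IntegrableOn (fun x => sin (π * x) ^ 2 * cos (2 * π * x)) 𝕋 :=
    Continuous.integrableOn_Ioc (by fun_prop)
  simp_rw [hpt]
  rw [integral_const_mul,
    integral_sub (by exact hs.sub (hsc.const_mul _))
      (by exact (hs₀.sub (hsc₀.const_mul _)).const_mul _),
    integral_sub hs (by exact hsc.const_mul _), integral_const_mul, integral_const_mul,
    integral_sub hs₀ (by exact hsc₀.const_mul _), integral_const_mul,
    setIntegral_sin_sq_pi_mul, setIntegral_sin_sq_pi_mul_mul_cos]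
  ring

lemma continuous_sin_sq_pi_mul_mul_cos_div_two_add_cos :
    Continuous fun x => sin (π * x) ^ 2 * cos (2 * π * x) / (2 + cos (2 * π * x)) :=
  by fun_prop (disch := exact fun x => by linarith [neg_one_le_cos (2 * π * x)])

lemma setIntegral_sin_sq_pi_mul_mul_cos_div_two_add_cos_neg :
    ∫ x in 𝕋, sin (π * x) ^ 2 * cos (2 * π * x) / (2 + cos (2 * π * x)) < 0 := by
  have hle (x : ℝ) : sin (π * x) ^ 2 * cos (2 * π * x) / (2 + cos (2 * π * x))
      ≤ sin (π * x) ^ 2 * cos (2 * π * x) / 2 := by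
    have := neg_one_le_cos (2 * π * x)
    rw [div_le_div_iff₀ (by linarith) two_pos]
    nlinarith [mul_nonneg (sq_nonneg (sin (π * x))) (sq_nonneg (cos (2 * π * x)))]
  calc ∫ x in 𝕋, sin (π * x) ^ 2 * cos (2 * π * x) / (2 + cos (2 * π * x))
      ≤ ∫ x in 𝕋, sin (π * x) ^ 2 * cos (2 * π * x) / 2 :=
        setIntegral_mono continuous_sin_sq_pi_mul_mul_cos_div_two_add_cos.integrableOn_Ioc
          (Continuous.integrableOn_Ioc (by fun_prop)) hle
    _ = -1 / 8 := by rw [integral_div, setIntegral_sin_sq_pi_mul_mul_cos]; norm_num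
    _ < 0 := by norm_num

lemma ae_eq_const_of_ae_two_add_cos_mul_eq {f : ℝ → ℝ} {a b : ℝ}
    (h : ∀ᵐ k ∂volume.restrict 𝕋, (2 + cos (2 * π * k)) * f k = a - b * cos (2 * π * k))
    (hb : ∫ k in 𝕋, sin (π * k) ^ 2 * cos (2 * π * k) * f k = b / 4) :
    ∀ᵐ k ∂volume.restrict 𝕋, f k = -b := by
  have hpos (k : ℝ) : 0 < 2 + cos (2 * π * k) := by linarith [neg_one_le_cos (2 * π * k)]
  have hf : ∀ᵐ k ∂volume.restrict 𝕋, f k = -b + (a + 2 * b) / (2 + cos (2 * π * k)) := by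
    filter_upwards [h] with k hk
    field_simp [(hpos k).ne']
    linarith
  have hmoment : b / 4 = b / 4 + (a + 2 * b)
      * ∫ k in 𝕋, sin (π * k) ^ 2 * cos (2 * π * k) / (2 + cos (2 * π * k)) :=
    calc b / 4 = ∫ k in 𝕋, sin (π * k) ^ 2 * cos (2 * π * k) * f k := hb.symm
      _ = ∫ k in 𝕋, (-b * (sin (π * k) ^ 2 * cos (2 * π * k))
            + (a + 2 * b) * (sin (π * k) ^ 2 * cos (2 * π * k) / (2 + cos (2 * π * k)))) := by
        refine integral_congr_ae ?_
        filter_upwards [hf] with k hk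
        rw [hk]; ring
      _ = _ := by
        have hsc : IntegrableOn (fun k => sin (π * k) ^ 2 * cos (2 * π * k)) 𝕋 :=
          Continuous.integrableOn_Ioc (by fun_prop)
        rw [integral_add (hsc.const_mul _)
          (continuous_sin_sq_pi_mul_mul_cos_div_two_add_cos.integrableOn_Ioc.const_mul _),
          integral_const_mul, integral_const_mul, setIntegral_sin_sq_pi_mul_mul_cos]
        ring
  have hab : a + 2 * b = 0 := by
    by_contra hne
    exact setIntegral_sin_sq_pi_mul_mul_cos_div_two_add_cos_neg.ne
      (mul_left_cancel₀ hne (by linarith))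
  filter_upwards [hf] with k hk
  rw [hk, hab, zero_div, add_zero]

/-- If f ∈ L²(T) satisfies ∫ R(k,k')(f(k') - f(k)) dk' = 0 for a.e. k, where
R(k,k') = 16 sin²(πk) sin²(πk')(sin²(π(k+k')) + sin²(π(k-k'))), then f is
constant almost everywhere on the torus T = [-1/2,1/2]. -/
theorem kernel_of_scattering_operator_is_constants
    (R : ℝ → ℝ → ℝ)
    (hR : ∀ k k' : ℝ, R k k' = 16 * Real.sin (π * k) ^ 2 * Real.sin (π * k') ^ 2
        * (Real.sin (π * (k + k')) ^ 2 + Real.sin (π * (k - k')) ^ 2))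
    (f : ℝ → ℝ)
    (hf : MemLp f 2 (volume.restrict (Ioc (-(1:ℝ)/2) (1/2))))
    (hker : ∀ᵐ k ∂(volume.restrict (Ioc (-(1:ℝ)/2) (1/2))),
        ∫ k' in Ioc (-(1:ℝ)/2) (1/2), R k k' * (f k' - f k) = 0) :
    ∃ c : ℝ, ∀ᵐ k ∂(volume.restrict (Ioc (-(1:ℝ)/2) (1/2))), f k = c := by
  have hfi : IntegrableOn f 𝕋 := hf.integrable one_le_two
  refine ⟨_, ae_eq_const_of_ae_two_add_cos_mul_eq (a := 4 * ∫ k in 𝕋, sin (π * k) ^ 2 * f k)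
    (b := 4 * ∫ k in 𝕋, sin (π * k) ^ 2 * cos (2 * π * k) * f k) ?_ (by ring)⟩
  filter_upwards [hker, ae_restrict_of_ae ae_sin_pi_mul_ne_zero] with k hk hsin
  simp only [hR] at hk
  rw [setIntegral_kernel_mul_sub hfi] at hk
  have hrel := (mul_eq_zero.mp hk).resolve_left (by positivity)
  linarith
end

section
/- Let ω(k) = (ω₀²/2 + 2 sin²(πk))^{1/2} with ω₀ > 0. Then for every a with 0 < |a| < 1/2 and σ ∈ {-1,1}, and also for a = 0 and σ = -1, the set {k ∈ T : ω'(k) = σ ω'(k+a)} is finite (in particular has Lebesgue measure zero). -/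
/-!
`ω` is a square root of a positive trigonometric polynomial, hence real-analytic, with
`ω' k = π sin (2πk) / ω k`; so `F k = ω' k - σ ω' (k + a)` is analytic on `ℝ`. It does not vanish
identically: for `a = 0, σ = -1` it is `2 ω'`, nonzero at `1/4`, and otherwise `F 0 = -σ ω' a ≠ 0`
because `sin (2πa) ≠ 0` for `0 < |a| < 1/2`. By the identity theorem the zeros of `F` are then
discrete, so only finitely many lie in the compact interval `[-1/2, 1/2]`.
-/

open MeasureTheory Set Real

theorem AnalyticOnNhd.finite_zeros_of_isCompact {𝕜 E : Type*} [NontriviallyNormedField 𝕜]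
    [NormedAddCommGroup E] [NormedSpace 𝕜 E] {f : 𝕜 → E} {U K : Set 𝕜}
    (hf : AnalyticOnNhd 𝕜 f U) (hU : IsPreconnected U) {x₀ : 𝕜} (hx₀ : x₀ ∈ U) (hfx₀ : f x₀ ≠ 0)
    (hK : IsCompact K) (hKU : K ⊆ U) : {x ∈ K | f x = 0}.Finite := by
  have hne : ∀ᶠ x in Filter.codiscreteWithin U, f x ≠ 0 :=
    (hf.eqOn_zero_or_eventually_ne_zero_of_preconnected hU).resolve_left fun h => hfx₀ (h hx₀)
  refine (hK.finite_sdiff_of_mem_codiscreteWithin (Filter.codiscreteWithin_mono hKU hne)).subset ?_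
  exact fun x ⟨hxK, hx⟩ => ⟨hxK, fun h => h hx⟩

theorem sin_two_pi_mul_ne_zero {k : ℝ} (hk₀ : k ≠ 0) (hk : |k| < 1 / 2) : sin (2 * π * k) ≠ 0 := by
  have hπk : |2 * π * k| < π := by
    rw [abs_mul, abs_of_pos (by positivity)]
    nlinarith [pi_pos]
  rw [Ne, sin_eq_zero_iff_of_lt_of_lt (abs_lt.1 hπk).1 (abs_lt.1 hπk).2]
  simp [hk₀, pi_ne_zero]

noncomputable def dispersion (c k : ℝ) : ℝ := √(c + 2 * sin (π * k) ^ 2)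

section

variable {c : ℝ} (hc : 0 < c)
include hc

theorem dispersion_sq_pos (k : ℝ) : 0 < c + 2 * sin (π * k) ^ 2 := by positivity

open scoped ContDiff in
theorem contDiff_dispersion : ContDiff ℝ ω (dispersion c) :=
  contDiff_iff_contDiffAt.2 fun k =>
    (contDiffAt_const.add (contDiffAt_const.mul
      ((contDiff_sin.comp (contDiff_const.mul contDiff_id)).contDiffAt.pow 2))).sqrt
      (dispersion_sq_pos hc k).ne'

theorem analyticOnNhd_deriv_dispersion : AnalyticOnNhd ℝ (deriv (dispersion c)) univ :=
  (contDiff_dispersion hc).analyticOnNhd.deriv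

theorem hasDerivAt_dispersion (k : ℝ) :
    HasDerivAt (dispersion c) (π * sin (2 * π * k) / dispersion c k) k := by
  have := ((((hasDerivAt_id k).const_mul π).sin.pow 2).const_mul 2).const_add c
    |>.sqrt (dispersion_sq_pos hc k).ne'
  convert this using 1
  · rfl
  · rw [mul_assoc, sin_two_mul]
    simp [dispersion]
    field_simp

theorem deriv_dispersion_eq_zero_iff (k : ℝ) :
    deriv (dispersion c) k = 0 ↔ sin (2 * π * k) = 0 := by
  have hpos : 0 < dispersion c k := sqrt_pos.2 (dispersion_sq_pos hc k)
  simp [(hasDerivAt_dispersion hc k).deriv, hpos.ne', pi_ne_zero]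

theorem exists_deriv_dispersion_sub_ne_zero {a σ : ℝ} (ha : |a| < 1 / 2) (hσ : σ = 1 ∨ σ = -1)
    (hne : ¬(a = 0 ∧ σ = 1)) :
    ∃ k, deriv (dispersion c) k - σ * deriv (dispersion c) (k + a) ≠ 0 := by
  by_cases ha₀ : a = 0
  · have hσ : σ = -1 := hσ.resolve_left fun h => hne ⟨ha₀, h⟩
    refine ⟨1 / 4, ?_⟩
    have : deriv (dispersion c) (1 / 4) ≠ 0 :=
      (deriv_dispersion_eq_zero_iff hc _).not.2
        (sin_two_pi_mul_ne_zero (by norm_num) (by rw [abs_of_pos] <;> norm_num))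
    rw [ha₀, hσ, add_zero]
    contrapose! this
    linarith
  · refine ⟨0, ?_⟩
    have hσ₀ : σ ≠ 0 := by rcases hσ with rfl | rfl <;> norm_num
    rw [(deriv_dispersion_eq_zero_iff hc 0).2 (by simp), zero_add, zero_sub, neg_ne_zero]
    exact mul_ne_zero hσ₀
      ((deriv_dispersion_eq_zero_iff hc a).not.2 (sin_two_pi_mul_ne_zero ha₀ ha))

end

/-- For the dispersion relation ω(k) = (ω₀²/2 + 2 sin²(πk))^{1/2} with ω₀ > 0, for every
(a, σ) with |a| < 1/2, σ = ±1 and (a, σ) ≠ (0, 1), the set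
{k ∈ T : ω'(k) = σ ω'(k+a)} is finite (in particular Lebesgue-null). -/
theorem dispersion_relation_no_resonance
    (ω₀ : ℝ) (hω₀ : 0 < ω₀)
    (ω : ℝ → ℝ)
    (hω : ∀ k, ω k = Real.sqrt (ω₀ ^ 2 / 2 + 2 * Real.sin (π * k) ^ 2)) :
    ∀ a : ℝ, |a| < 1/2 → ∀ σ : ℝ, (σ = 1 ∨ σ = -1) → ¬(a = 0 ∧ σ = 1) →
      Set.Finite {k : ℝ | k ∈ Ioc (-(1:ℝ)/2) (1/2) ∧ deriv ω k = σ * deriv ω (k + a)} := by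
  intro a ha σ hσ hne
  set c := ω₀ ^ 2 / 2
  have hc : 0 < c := by positivity
  obtain rfl : ω = dispersion c := funext hω
  have hω' := analyticOnNhd_deriv_dispersion hc
  have hF : AnalyticOnNhd ℝ (fun k => deriv (dispersion c) k - σ * deriv (dispersion c) (k + a))
      univ := fun k _ =>
    (hω' k trivial).sub
      (analyticAt_const.mul ((hω' _ trivial).comp (analyticAt_id.add analyticAt_const)))
  obtain ⟨k₀, hk₀⟩ := exists_deriv_dispersion_sub_ne_zero hc ha hσ hne
  refine (hF.finite_zeros_of_isCompact isPreconnected_univ (mem_univ k₀) hk₀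
    (isCompact_Icc (a := -(1 : ℝ) / 2) (b := 1 / 2)) (subset_univ _)).subset ?_
  exact fun k ⟨hk, hres⟩ => ⟨Ioc_subset_Icc_self hk, sub_eq_zero.2 hres⟩
end
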